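/- arXiv:2312.11200 — 4 statements merged into one kernel-verified Lean document; each statement's English description precedes it below -/
import Mathlib

section
/- Let p > 0 and α > 0 be real numbers. The function g(X) = Tr(X^{−p}) is μ-strongly convex with respect to the Frobenius norm on the convex set 𝒟 = {X ∈ ℝ^{n×n} : X symmetric positive definite, λ_max(X) ≤ α}, with μ = p(p+1)/α^{p+2}; that is, X ↦ Tr(X^{−p}) − (μ/2)·‖X‖_F² is convex on 𝒟. -/
/-!
With `c = p(p+1)/(2α^{p+2})`, the function is `X ↦ ∑ᵢ f(λᵢ(X))` for `f(t) = t^{-p} - c t²`,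
which is convex on `(0, α]` because `f''(t) = p(p+1)(t^{-p-2} - α^{-p-2}) ≥ 0`.
Spectral sums of convex functions are convex: if `W` diagonalizes `C = aA + bB`, then
`λ(C) = a·diag(Wᵀ A W) + b·diag(Wᵀ B W)`, and `diag(Wᵀ A W)` is the image of `λ(A)` under the
doubly stochastic matrix `((Wᵀ V)ᵢⱼ²)`, `V` an eigenbasis of `A`; Jensen's inequality then gives
Peierls' inequality `∑ᵢ f((Wᵀ A W)ᵢᵢ) ≤ ∑ᵢ f(λᵢ(A))`.
-/

open Matrix

/-- Largest eigenvalue of a (Hermitian) real matrix. -/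
noncomputable def eigMax {n : ℕ} (M : Matrix (Fin n) (Fin n) ℝ) : ℝ :=
  if h : M.IsHermitian then ⨆ i, h.eigenvalues i else 0

/-- Smallest eigenvalue of a (Hermitian) real matrix. -/
noncomputable def eigMin {n : ℕ} (M : Matrix (Fin n) (Fin n) ℝ) : ℝ :=
  if h : M.IsHermitian then ⨅ i, h.eigenvalues i else 0

/-- Spectral norm (largest singular value) of a real matrix. -/
noncomputable def specNorm {m n : ℕ} (A : Matrix (Fin m) (Fin n) ℝ) : ℝ :=
  Real.sqrt (eigMax (Aᵀ * A))

/-- Real power of a symmetric matrix, via the spectral decomposition: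
`M ^ r` has the same eigenvectors as `M` and eigenvalues `λᵢ ^ r`. -/
noncomputable def mpow {n : ℕ} (M : Matrix (Fin n) (Fin n) ℝ) (r : ℝ) :
    Matrix (Fin n) (Fin n) ℝ :=
  if h : M.IsHermitian then
    (h.eigenvectorUnitary : Matrix (Fin n) (Fin n) ℝ) *
      Matrix.diagonal (fun i => h.eigenvalues i ^ r) *
      (star h.eigenvectorUnitary : Matrix (Fin n) (Fin n) ℝ)
  else 0

/-- Frobenius norm of a real matrix. -/
noncomputable def frobNorm {m n : ℕ} (M : Matrix (Fin m) (Fin n) ℝ) : ℝ :=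
  Real.sqrt ((Mᵀ * M).trace)

open Set

namespace Matrix

variable {ι : Type*} [Fintype ι] [DecidableEq ι] {s : Set ℝ}

lemma map_sq_mem_doublyStochastic {M : Matrix ι ι ℝ} (hM : M ∈ unitaryGroup ι ℝ) :
    M.map (· ^ 2) ∈ doublyStochastic ℝ ι := by
  refine mem_doublyStochastic_iff_sum.2 ⟨fun i j => sq_nonneg _, fun i => ?_, fun j => ?_⟩
  · simpa [mul_apply, sq] using congr_fun₂ (mem_unitaryGroup_iff.1 hM) i i
  · simpa [mul_apply, sq] using congr_fun₂ (mem_unitaryGroup_iff'.1 hM) j j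

lemma _root_.Convex.rowStochastic_mulVec_mem (hs : Convex ℝ s) {D : Matrix ι ι ℝ}
    (hD : D ∈ rowStochastic ℝ ι) {x : ι → ℝ} (hx : ∀ j, x j ∈ s) (i : ι) :
    (D *ᵥ x) i ∈ s := by
  simpa [mulVec, dotProduct] using hs.sum_mem (fun j _ => nonneg_of_mem_rowStochastic hD)
    (sum_row_of_mem_rowStochastic hD i) (fun j _ => hx j)

lemma _root_.ConvexOn.sum_doublyStochastic_mulVec_le {f : ℝ → ℝ} (hf : ConvexOn ℝ s f)
    {D : Matrix ι ι ℝ} (hD : D ∈ doublyStochastic ℝ ι) {x : ι → ℝ}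
    (hx : ∀ j, x j ∈ s) :
    ∑ i, f ((D *ᵥ x) i) ≤ ∑ i, f (x i) :=
  calc ∑ i, f ((D *ᵥ x) i)
      ≤ ∑ i, ∑ j, D i j * f (x j) := by
        gcongr with i
        simpa [mulVec, dotProduct] using hf.map_sum_le
          (fun j _ => nonneg_of_mem_doublyStochastic hD) (sum_row_of_mem_doublyStochastic hD i)
          (fun j _ => hx j)
    _ = ∑ i, f (x i) := by
        rw [Finset.sum_comm]
        simp only [← Finset.sum_mul, sum_col_of_mem_doublyStochastic hD, one_mul]

lemma diag_mul_diagonal_mul_star (M : Matrix ι ι ℝ) (d : ι → ℝ) :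
    (M * diagonal d * star M).diag = M.map (· ^ 2) *ᵥ d := by
  ext i
  rw [diag_apply, mul_apply]
  simp only [mul_diagonal, star_apply, star_trivial, mulVec, dotProduct, map_apply]
  exact Finset.sum_congr rfl fun j _ => by ring

namespace IsHermitian

variable {A : Matrix ι ι ℝ}

lemma eq_mul_diagonal_mul_star (hA : A.IsHermitian) :
    A = hA.eigenvectorUnitary * diagonal hA.eigenvalues *
      star (hA.eigenvectorUnitary : Matrix ι ι ℝ) := by
  conv_lhs => rw [hA.spectral_theorem]
  simp [RCLike.ofReal_real_eq_id]

lemma eigenvalues_eq_diag (hA : A.IsHermitian) :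
    hA.eigenvalues =
      (star (hA.eigenvectorUnitary : Matrix ι ι ℝ) * A * hA.eigenvectorUnitary).diag := by
  rw [← Unitary.conjStarAlgAut_star_apply (S := ℝ), hA.conjStarAlgAut_star_eigenvectorUnitary,
    RCLike.ofReal_real_eq_id, Function.id_comp, diag_diagonal]

lemma diag_star_mul_mul (hA : A.IsHermitian) (U : Matrix ι ι ℝ) :
    (star U * A * U).diag =
      (star U * hA.eigenvectorUnitary).map (· ^ 2) *ᵥ hA.eigenvalues := by
  rw [← diag_mul_diagonal_mul_star, star_mul, star_star]
  conv_lhs => rw [hA.eq_mul_diagonal_mul_star]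
  simp only [Matrix.mul_assoc]

lemma diag_star_mul_mul_mem (hA : A.IsHermitian) (hs : Convex ℝ s)
    (hspec : ∀ i, hA.eigenvalues i ∈ s) {U : Matrix ι ι ℝ} (hU : U ∈ unitaryGroup ι ℝ)
    (i : ι) :
    (star U * A * U) i i ∈ s := by
  have hD := (mem_doublyStochastic_iff_mem_rowStochastic_and_mem_colStochastic.1
    (map_sq_mem_doublyStochastic (mul_mem (Unitary.star_mem hU) hA.eigenvectorUnitary.2))).1
  rw [← diag_apply (star U * A * U), hA.diag_star_mul_mul U]
  exact hs.rowStochastic_mulVec_mem hD hspec i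

lemma sum_diag_star_mul_mul_le (hA : A.IsHermitian) {f : ℝ → ℝ}
    (hf : ConvexOn ℝ s f) (hspec : ∀ i, hA.eigenvalues i ∈ s) {U : Matrix ι ι ℝ}
    (hU : U ∈ unitaryGroup ι ℝ) :
    ∑ i, f ((star U * A * U) i i) ≤ ∑ i, f (hA.eigenvalues i) := by
  simp only [← diag_apply (star U * A * U), hA.diag_star_mul_mul U]
  exact hf.sum_doublyStochastic_mulVec_le
    (map_sq_mem_doublyStochastic (mul_mem (Unitary.star_mem hU) hA.eigenvectorUnitary.2)) hspec

lemma eigenvalues_smul_add_smul {B : Matrix ι ι ℝ} {a b : ℝ}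
    (hC : (a • A + b • B).IsHermitian) :
    hC.eigenvalues = fun i =>
      a * (star (hC.eigenvectorUnitary : Matrix ι ι ℝ) * A * hC.eigenvectorUnitary) i i +
        b * (star (hC.eigenvectorUnitary : Matrix ι ι ℝ) * B * hC.eigenvectorUnitary) i i := by
  ext i
  simp [hC.eigenvalues_eq_diag, Matrix.mul_add, Matrix.add_mul]

end IsHermitian

/-- `spectralSum f A = Tr f(A)` for a symmetric matrix `A`. -/
noncomputable def spectralSum (f : ℝ → ℝ) (A : Matrix ι ι ℝ) : ℝ :=
  if hA : A.IsHermitian then ∑ i, f (hA.eigenvalues i) else 0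

lemma IsHermitian.spectralSum_eq {A : Matrix ι ι ℝ} (hA : A.IsHermitian) (f : ℝ → ℝ) :
    spectralSum f A = ∑ i, f (hA.eigenvalues i) :=
  dif_pos hA

lemma convex_setOf_eigenvalues_mem (hs : Convex ℝ s) :
    Convex ℝ {A : Matrix ι ι ℝ | ∃ hA : A.IsHermitian, ∀ i, hA.eigenvalues i ∈ s} := by
  rintro A ⟨hA, hAs⟩ B ⟨hB, hBs⟩ a b ha hb hab
  have hC : (a • A + b • B).IsHermitian := (hA.smul (.all a)).add (hB.smul (.all b))
  have hW := hC.eigenvectorUnitary.2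
  refine ⟨hC, fun i => ?_⟩
  rw [hC.eigenvalues_smul_add_smul]
  exact hs (hA.diag_star_mul_mul_mem hs hAs hW i) (hB.diag_star_mul_mul_mem hs hBs hW i)
    ha hb hab

theorem convexOn_spectralSum {f : ℝ → ℝ} (hf : ConvexOn ℝ s f) :
    ConvexOn ℝ {A : Matrix ι ι ℝ | ∃ hA : A.IsHermitian, ∀ i, hA.eigenvalues i ∈ s}
      (spectralSum f) := by
  refine ⟨convex_setOf_eigenvalues_mem hf.1, ?_⟩
  rintro A ⟨hA, hAs⟩ B ⟨hB, hBs⟩ a b ha hb hab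
  have hC : (a • A + b • B).IsHermitian := (hA.smul (.all a)).add (hB.smul (.all b))
  have hW := hC.eigenvectorUnitary.2
  set W : Matrix ι ι ℝ := (hC.eigenvectorUnitary : Matrix ι ι ℝ)
  rw [hC.spectralSum_eq, hA.spectralSum_eq, hB.spectralSum_eq, hC.eigenvalues_smul_add_smul]
  calc ∑ i, f (a * (star W * A * W) i i + b * (star W * B * W) i i)
      ≤ ∑ i, (a * f ((star W * A * W) i i) + b * f ((star W * B * W) i i)) := by
        gcongr with i
        exact hf.2 (hA.diag_star_mul_mul_mem hf.1 hAs hW i)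
          (hB.diag_star_mul_mul_mem hf.1 hBs hW i) ha hb hab
    _ = a * ∑ i, f ((star W * A * W) i i) + b * ∑ i, f ((star W * B * W) i i) := by
        rw [Finset.sum_add_distrib, Finset.mul_sum, Finset.mul_sum]
    _ ≤ a * ∑ i, f (hA.eigenvalues i) + b * ∑ i, f (hB.eigenvalues i) := by
        gcongr a * ?_ + b * ?_
        · exact hA.sum_diag_star_mul_mul_le hf hAs hW
        · exact hB.sum_diag_star_mul_mul_le hf hBs hW

end Matrix

lemma convexOn_rpow_neg_sub_mul_sq {p α : ℝ} (hp : 0 < p) :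
    ConvexOn ℝ (Ioc 0 α) (fun t => t ^ (-p) - p * (p + 1) / α ^ (p + 2) / 2 * t ^ 2) := by
  set c := p * (p + 1) / α ^ (p + 2) / 2 with hc
  refine convexOn_of_hasDerivWithinAt2_nonneg (convex_Ioc 0 α)
    (f' := fun t => -p * t ^ (-p - 1) - c * (2 * t))
    (f'' := fun t => -p * ((-p - 1) * t ^ (-p - 1 - 1)) - c * 2) ?_ ?_ ?_ ?_
  · exact fun t ht => ((Real.continuousAt_rpow_const t (-p) (.inl ht.1.ne')).sub
      (by fun_prop)).continuousWithinAt
  · rw [interior_Ioc]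
    refine fun x hx => HasDerivAt.hasDerivWithinAt ?_
    exact ((Real.hasDerivAt_rpow_const (.inl hx.1.ne')).sub
      ((hasDerivAt_pow 2 x).const_mul c)).congr_deriv (by norm_num)
  · rw [interior_Ioc]
    refine fun x hx => HasDerivAt.hasDerivWithinAt ?_
    exact (((Real.hasDerivAt_rpow_const (.inl hx.1.ne')).const_mul (-p)).sub
      (((hasDerivAt_id x).const_mul 2).const_mul c)).congr_deriv (by norm_num)
  · rw [interior_Ioc]
    rintro x ⟨hx, hxα⟩
    have hα : 0 < α := hx.trans hxα
    have hpow : α ^ (-p - 1 - 1) ≤ x ^ (-p - 1 - 1) :=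
      Real.rpow_le_rpow_of_nonpos hx hxα.le (by linarith)
    have hc2 : c * 2 = p * (p + 1) * α ^ (-p - 1 - 1) := by
      rw [hc, show -p - 1 - 1 = -(p + 2) by ring, Real.rpow_neg hα.le]
      ring
    have hpp : 0 ≤ p * (p + 1) := by positivity
    simp only [hc2]
    nlinarith [mul_le_mul_of_nonneg_left hpow hpp]

section

variable {n : ℕ} {X : Matrix (Fin n) (Fin n) ℝ}

lemma Matrix.IsHermitian.trace_mpow (hX : X.IsHermitian) (r : ℝ) :
    (mpow X r).trace = ∑ i, hX.eigenvalues i ^ r := by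
  rw [mpow, dif_pos hX, trace_mul_cycle, Unitary.coe_star_mul_self, Matrix.one_mul,
    trace_diagonal]

lemma Matrix.IsHermitian.trace_transpose_mul_self (hX : X.IsHermitian) :
    (Xᵀ * X).trace = ∑ i, hX.eigenvalues i ^ 2 := by
  have hsq : X * X = Unitary.conjStarAlgAut ℝ _ hX.eigenvectorUnitary
      (diagonal (RCLike.ofReal ∘ hX.eigenvalues) *
        diagonal (RCLike.ofReal ∘ hX.eigenvalues)) := by
    rw [map_mul, ← hX.spectral_theorem]
  rw [← conjTranspose_eq_transpose_of_trivial, hX.eq, hsq, Unitary.conjStarAlgAut_apply,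
    trace_mul_cycle, Unitary.coe_star_mul_self, Matrix.one_mul, diagonal_mul_diagonal,
    trace_diagonal]
  simp [sq]

lemma Matrix.IsHermitian.eigMax_eq (hX : X.IsHermitian) : eigMax X = ⨆ i, hX.eigenvalues i :=
  dif_pos hX

lemma posDef_and_eigMax_le_iff {α : ℝ} (hα : 0 ≤ α) :
    X.PosDef ∧ eigMax X ≤ α ↔
      ∃ hX : X.IsHermitian, ∀ i, hX.eigenvalues i ∈ Ioc 0 α := by
  constructor
  · rintro ⟨hX, hmax⟩
    refine ⟨hX.1, fun i => ⟨hX.eigenvalues_pos i, ?_⟩⟩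
    rw [hX.1.eigMax_eq] at hmax
    exact (le_ciSup (Set.finite_range _).bddAbove i).trans hmax
  · rintro ⟨hX, hspec⟩
    refine ⟨hX.posDef_iff_eigenvalues_pos.2 fun i => (hspec i).1, ?_⟩
    rw [hX.eigMax_eq]
    exact Real.iSup_le (fun i => (hspec i).2) hα

end

/-- `g(X) = Tr(X^{−p})` is `μ`-strongly convex w.r.t. the Frobenius norm
on `𝒟 = {X ≻ 0 : λ_max(X) ≤ α}` with `μ = p(p+1)/α^{p+2}`: the function
`X ↦ Tr(X^{−p}) − (μ/2)·‖X‖_F²` (where `‖X‖_F² = Tr(Xᵀ X)`) is convex on `𝒟`. -/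
theorem trace_power_strongly_convex (n : ℕ) (p α : ℝ) (hp : 0 < p) (hα : 0 < α) :
    ConvexOn ℝ {X : Matrix (Fin n) (Fin n) ℝ | X.PosDef ∧ eigMax X ≤ α}
      (fun X => (mpow X (-p)).trace - p * (p + 1) / α ^ (p + 2) / 2 * (Xᵀ * X).trace) := by
  have hD : {X : Matrix (Fin n) (Fin n) ℝ | X.PosDef ∧ eigMax X ≤ α} =
      {X | ∃ hX : X.IsHermitian, ∀ i, hX.eigenvalues i ∈ Ioc 0 α} :=
    Set.ext fun X => posDef_and_eigMax_le_iff hα.le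
  rw [hD]
  refine (convexOn_spectralSum (convexOn_rpow_neg_sub_mul_sq hp)).congr ?_
  rintro X ⟨hX, -⟩
  dsimp only
  rw [hX.spectralSum_eq, hX.trace_mpow, hX.trace_transpose_mul_self, Finset.mul_sum,
    ← Finset.sum_sub_distrib]
end

section
/- For every real p > 0, the function k(X) = log(Tr(X^{−p})) is convex on the convex cone of symmetric positive definite n×n real matrices: for all symmetric positive definite A, B and all γ ∈ [0,1], log Tr((γA + (1−γ)B)^{−p}) ≤ γ·log Tr(A^{−p}) + (1−γ)·log Tr(B^{−p}). -/
open Matrix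

/-! Let `u_j` be an orthonormal eigenbasis of `X = γA + (1-γ)B`, so that its eigenvalues are
`λ_j = γ a_j + (1-γ) b_j` with `a_j = ⟨u_j, A u_j⟩`, `b_j = ⟨u_j, B u_j⟩`. Weighted AM-GM makes
`t ↦ t^{-p}` log-convex, `λ_j^{-p} ≤ (a_j^{-p})^γ (b_j^{-p})^{1-γ}`, and Hölder's inequality gives
`Tr X^{-p} ≤ (∑ a_j^{-p})^γ (∑ b_j^{-p})^{1-γ}`. Finally `a_j^{-p} ≤ ⟨u_j, A^{-p} u_j⟩` by Jensen's
inequality for the convex function `t^{-p}` in the eigenbasis of `A`, and these sum to `Tr A^{-p}`.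
-/

open Real Finset

lemma rpow_neg_arith_mean2_weighted_le {w₁ w₂ a b p : ℝ} (hw₁ : 0 ≤ w₁) (hw₂ : 0 ≤ w₂)
    (hw : w₁ + w₂ = 1) (ha : 0 < a) (hb : 0 < b) (hp : 0 ≤ p) :
    (w₁ * a + w₂ * b) ^ (-p) ≤ (a ^ (-p)) ^ w₁ * (b ^ (-p)) ^ w₂ :=
  calc (w₁ * a + w₂ * b) ^ (-p) ≤ (a ^ w₁ * b ^ w₂) ^ (-p) :=
        rpow_le_rpow_of_nonpos (by positivity)
          (geom_mean_le_arith_mean2_weighted hw₁ hw₂ ha.le hb.le hw) (neg_nonpos.2 hp)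
    _ = (a ^ (-p)) ^ w₁ * (b ^ (-p)) ^ w₂ := by
        rw [mul_rpow (by positivity) (by positivity), ← rpow_mul ha.le, ← rpow_mul hb.le,
          ← rpow_mul ha.le, ← rpow_mul hb.le, mul_comm w₁, mul_comm w₂]

lemma convexOn_rpow_neg {p : ℝ} (hp : 0 ≤ p) : ConvexOn ℝ (Set.Ioi 0) fun x : ℝ ↦ x ^ (-p) :=
  ⟨convex_Ioi 0, fun _ ha _ hb _ _ hw₁ hw₂ hw ↦
    (rpow_neg_arith_mean2_weighted_le hw₁ hw₂ hw ha hb hp).trans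
      (geom_mean_le_arith_mean2_weighted hw₁ hw₂ (rpow_pos_of_pos ha _).le
        (rpow_pos_of_pos hb _).le hw)⟩

lemma sum_rpow_mul_rpow_le {ι : Type*} (s : Finset ι) {f g : ι → ℝ} (hf : ∀ i ∈ s, 0 ≤ f i)
    (hg : ∀ i ∈ s, 0 ≤ g i) {w₁ w₂ : ℝ} (hw₁ : 0 ≤ w₁) (hw₂ : 0 ≤ w₂) (hw : w₁ + w₂ = 1) :
    ∑ i ∈ s, f i ^ w₁ * g i ^ w₂ ≤ (∑ i ∈ s, f i) ^ w₁ * (∑ i ∈ s, g i) ^ w₂ := by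
  obtain rfl | hw₁ := hw₁.eq_or_lt
  · simp [show w₂ = 1 by linarith]
  obtain rfl | hw₂ := hw₂.eq_or_lt
  · simp [show w₁ = 1 by linarith]
  convert inner_le_Lp_mul_Lq_of_nonneg s (HolderConjugate.inv_inv hw₁ hw₂ hw)
    (fun i hi ↦ rpow_nonneg (hf i hi) w₁) (fun i hi ↦ rpow_nonneg (hg i hi) w₂) using 3
  · exact sum_congr rfl fun i hi ↦ (rpow_rpow_inv (hf i hi) hw₁.ne').symm
  · rw [one_div, inv_inv]
  · exact sum_congr rfl fun i hi ↦ (rpow_rpow_inv (hg i hi) hw₂.ne').symm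
  · rw [one_div, inv_inv]

lemma sum_rpow_neg_arith_mean2_weighted_le {ι : Type*} (s : Finset ι) {a b : ι → ℝ}
    (ha : ∀ i ∈ s, 0 < a i) (hb : ∀ i ∈ s, 0 < b i) {w₁ w₂ p : ℝ} (hw₁ : 0 ≤ w₁) (hw₂ : 0 ≤ w₂)
    (hw : w₁ + w₂ = 1) (hp : 0 ≤ p) :
    ∑ i ∈ s, (w₁ * a i + w₂ * b i) ^ (-p) ≤
      (∑ i ∈ s, a i ^ (-p)) ^ w₁ * (∑ i ∈ s, b i ^ (-p)) ^ w₂ :=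
  (sum_le_sum fun i hi ↦ rpow_neg_arith_mean2_weighted_le hw₁ hw₂ hw (ha i hi) (hb i hi) hp).trans
    (sum_rpow_mul_rpow_le s (fun i hi ↦ (rpow_pos_of_pos (ha i hi) _).le)
      (fun i hi ↦ (rpow_pos_of_pos (hb i hi) _).le) hw₁ hw₂ hw)

section
variable {n : ℕ}

lemma dotProduct_conj_diagonal_mulVec (V : Matrix (Fin n) (Fin n) ℝ) (d : Fin n → ℝ)
    (u : Fin n → ℝ) :
    u ⬝ᵥ ((V * diagonal d * star V) *ᵥ u) = ∑ i, (star V *ᵥ u) i ^ 2 * d i := by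
  rw [← mulVec_mulVec, ← mulVec_mulVec, dotProduct_mulVec, star_eq_conjTranspose,
    conjTranspose_eq_transpose_of_trivial, ← mulVec_transpose]
  simp only [dotProduct, mulVec_diagonal]
  exact sum_congr rfl fun i _ ↦ by ring

lemma dotProduct_star_mulVec_self {V : Matrix (Fin n) (Fin n) ℝ}
    (hV : V ∈ unitaryGroup (Fin n) ℝ) (u : Fin n → ℝ) :
    ∑ i, (star V *ᵥ u) i ^ 2 = u ⬝ᵥ u := by
  simpa [mem_unitaryGroup_iff.mp hV] using (dotProduct_conj_diagonal_mulVec V 1 u).symm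

lemma dotProduct_transpose_self_of_mem_unitaryGroup {U : Matrix (Fin n) (Fin n) ℝ}
    (hU : U ∈ unitaryGroup (Fin n) ℝ) (j : Fin n) : Uᵀ j ⬝ᵥ Uᵀ j = 1 := by
  simpa [mul_apply, dotProduct] using congrFun (congrFun (mem_unitaryGroup_iff'.mp hU) j) j

lemma sum_dotProduct_mulVec_transpose_eq_trace {U : Matrix (Fin n) (Fin n) ℝ}
    (hU : U ∈ unitaryGroup (Fin n) ℝ) (M : Matrix (Fin n) (Fin n) ℝ) :
    ∑ j, Uᵀ j ⬝ᵥ (M *ᵥ Uᵀ j) = M.trace := by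
  have hUUt : U * Uᵀ = 1 := by
    simpa [star_eq_conjTranspose] using mem_unitaryGroup_iff.mp hU
  calc ∑ j, Uᵀ j ⬝ᵥ (M *ᵥ Uᵀ j) = (Uᵀ * M * U).trace := by
        refine sum_congr rfl fun j _ ↦ ?_
        simp only [diag_apply, mul_apply, dotProduct, mulVec, transpose_apply, mul_sum, sum_mul]
        rw [sum_comm]
        exact sum_congr rfl fun _ _ ↦ sum_congr rfl fun _ _ ↦ by ring
    _ = M.trace := by rw [trace_mul_cycle, hUUt, one_mul]

lemma mpow_eq {A : Matrix (Fin n) (Fin n) ℝ} (hA : A.IsHermitian) (r : ℝ) :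
    mpow A r = (hA.eigenvectorUnitary : Matrix (Fin n) (Fin n) ℝ) *
      diagonal (fun i ↦ hA.eigenvalues i ^ r) *
        star (hA.eigenvectorUnitary : Matrix (Fin n) (Fin n) ℝ) :=
  dif_pos hA

lemma mpow_one {A : Matrix (Fin n) (Fin n) ℝ} (hA : A.IsHermitian) : mpow A 1 = A := by
  simpa [mpow_eq hA, RCLike.ofReal_real_eq_id] using hA.spectral_theorem.symm

lemma trace_mpow {A : Matrix (Fin n) (Fin n) ℝ} (hA : A.IsHermitian) (r : ℝ) :
    (mpow A r).trace = ∑ i, hA.eigenvalues i ^ r := by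
  rw [mpow_eq hA, trace_mul_cycle, Unitary.coe_star_mul_self, one_mul, trace_diagonal]

lemma trace_mpow_pos [Nonempty (Fin n)] {A : Matrix (Fin n) (Fin n) ℝ} (hA : A.PosDef) (r : ℝ) :
    0 < (mpow A r).trace := by
  rw [trace_mpow hA.1]
  exact sum_pos (fun i _ ↦ rpow_pos_of_pos (hA.eigenvalues_pos i) _) univ_nonempty

lemma dotProduct_mpow_mulVec {A : Matrix (Fin n) (Fin n) ℝ} (hA : A.IsHermitian) (r : ℝ)
    (u : Fin n → ℝ) :
    u ⬝ᵥ (mpow A r *ᵥ u) =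
      ∑ i, (star (hA.eigenvectorUnitary : Matrix (Fin n) (Fin n) ℝ) *ᵥ u) i ^ 2 *
        hA.eigenvalues i ^ r := by
  rw [mpow_eq hA, dotProduct_conj_diagonal_mulVec]

lemma rpow_neg_dotProduct_mulVec_le {A : Matrix (Fin n) (Fin n) ℝ} (hA : A.PosDef) {p : ℝ}
    (hp : 0 ≤ p) {u : Fin n → ℝ} (hu : u ⬝ᵥ u = 1) :
    (u ⬝ᵥ (A *ᵥ u)) ^ (-p) ≤ u ⬝ᵥ (mpow A (-p) *ᵥ u) := by
  have hw := dotProduct_star_mulVec_self hA.1.eigenvectorUnitary.2 u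
  rw [hu] at hw
  conv_lhs => rw [← mpow_one hA.1]
  rw [dotProduct_mpow_mulVec, dotProduct_mpow_mulVec]
  simpa [rpow_one, smul_eq_mul] using (convexOn_rpow_neg hp).map_sum_le (t := univ)
    (fun i _ ↦ sq_nonneg _) hw (fun i _ ↦ hA.eigenvalues_pos i)

lemma sum_rpow_neg_dotProduct_mulVec_le_trace_mpow {U C : Matrix (Fin n) (Fin n) ℝ}
    (hU : U ∈ unitaryGroup (Fin n) ℝ) (hC : C.PosDef) {p : ℝ} (hp : 0 ≤ p) :
    ∑ j, (Uᵀ j ⬝ᵥ (C *ᵥ Uᵀ j)) ^ (-p) ≤ (mpow C (-p)).trace :=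
  (sum_le_sum fun j _ ↦ rpow_neg_dotProduct_mulVec_le hC hp
    (dotProduct_transpose_self_of_mem_unitaryGroup hU j)).trans_eq
      (sum_dotProduct_mulVec_transpose_eq_trace hU _)

lemma Matrix.PosDef.smul_add_smul {A B : Matrix (Fin n) (Fin n) ℝ} (hA : A.PosDef) (hB : B.PosDef)
    {w₁ w₂ : ℝ} (hw₁ : 0 ≤ w₁) (hw₂ : 0 ≤ w₂) (hw : w₁ + w₂ = 1) : (w₁ • A + w₂ • B).PosDef := by
  obtain rfl | hw₁ := hw₁.eq_or_lt
  · exact PosDef.posSemidef_add (hA.posSemidef.smul le_rfl) (hB.smul (by linarith))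
  · exact (hA.smul hw₁).add_posSemidef (hB.posSemidef.smul hw₂)

theorem trace_mpow_neg_smul_add_smul_le {A B : Matrix (Fin n) (Fin n) ℝ} (hA : A.PosDef)
    (hB : B.PosDef) {p w₁ w₂ : ℝ} (hp : 0 ≤ p) (hw₁ : 0 ≤ w₁) (hw₂ : 0 ≤ w₂) (hw : w₁ + w₂ = 1) :
    (mpow (w₁ • A + w₂ • B) (-p)).trace ≤
      (mpow A (-p)).trace ^ w₁ * (mpow B (-p)).trace ^ w₂ := by
  have hX := (hA.smul_add_smul hB hw₁ hw₂ hw).1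
  set U := (hX.eigenvectorUnitary : Matrix (Fin n) (Fin n) ℝ)
  have hU : U ∈ unitaryGroup (Fin n) ℝ := hX.eigenvectorUnitary.2
  have hunit : ∀ j, Uᵀ j ⬝ᵥ Uᵀ j = 1 := dotProduct_transpose_self_of_mem_unitaryGroup hU
  have heig : ∀ j, hX.eigenvalues j = w₁ * (Uᵀ j ⬝ᵥ (A *ᵥ Uᵀ j)) + w₂ * (Uᵀ j ⬝ᵥ (B *ᵥ Uᵀ j)) :=
    fun j ↦ by
      simpa [U, add_mulVec, smul_mulVec, dotProduct_add, dotProduct_comm] using hX.eigenvalues_eq j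
  have hpos : ∀ {C : Matrix (Fin n) (Fin n) ℝ}, C.PosDef → ∀ j, 0 < Uᵀ j ⬝ᵥ (C *ᵥ Uᵀ j) :=
    fun hC j ↦ by
      simpa using hC.dotProduct_mulVec_pos (x := Uᵀ j) fun h ↦ by simpa [h] using hunit j
  have hpeierls : ∀ {C : Matrix (Fin n) (Fin n) ℝ}, C.PosDef →
      ∑ j, (Uᵀ j ⬝ᵥ (C *ᵥ Uᵀ j)) ^ (-p) ≤ (mpow C (-p)).trace :=
    fun hC ↦ sum_rpow_neg_dotProduct_mulVec_le_trace_mpow hU hC hp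
  calc (mpow (w₁ • A + w₂ • B) (-p)).trace
      = ∑ j, (w₁ * (Uᵀ j ⬝ᵥ (A *ᵥ Uᵀ j)) + w₂ * (Uᵀ j ⬝ᵥ (B *ᵥ Uᵀ j))) ^ (-p) := by
        simp only [trace_mpow hX, heig]
    _ ≤ (∑ j, (Uᵀ j ⬝ᵥ (A *ᵥ Uᵀ j)) ^ (-p)) ^ w₁ * (∑ j, (Uᵀ j ⬝ᵥ (B *ᵥ Uᵀ j)) ^ (-p)) ^ w₂ :=
        sum_rpow_neg_arith_mean2_weighted_le univ (fun j _ ↦ hpos hA j) (fun j _ ↦ hpos hB j)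
          hw₁ hw₂ hw hp
    _ ≤ (mpow A (-p)).trace ^ w₁ * (mpow B (-p)).trace ^ w₂ := by
        have hsum_nonneg : ∀ {C : Matrix (Fin n) (Fin n) ℝ}, C.PosDef →
            0 ≤ ∑ j, (Uᵀ j ⬝ᵥ (C *ᵥ Uᵀ j)) ^ (-p) :=
          fun hC ↦ sum_nonneg fun j _ ↦ (rpow_pos_of_pos (hpos hC j) _).le
        exact mul_le_mul (rpow_le_rpow (hsum_nonneg hA) (hpeierls hA) hw₁)
          (rpow_le_rpow (hsum_nonneg hB) (hpeierls hB) hw₂) (rpow_nonneg (hsum_nonneg hB) _)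
          (rpow_nonneg ((hsum_nonneg hA).trans (hpeierls hA)) _)

end

/-- For every `p > 0`, `k(X) = log(Tr(X^{−p}))` is convex on the cone of
symmetric positive definite matrices:
`log Tr((γA + (1−γ)B)^{−p}) ≤ γ·log Tr(A^{−p}) + (1−γ)·log Tr(B^{−p})` for `γ ∈ [0,1]`. -/
theorem log_trace_power_convex (n : ℕ) (p : ℝ) (hp : 0 < p)
    (A B : Matrix (Fin n) (Fin n) ℝ) (hA : A.PosDef) (hB : B.PosDef)
    (γ : ℝ) (hγ0 : 0 ≤ γ) (hγ1 : γ ≤ 1) :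
    Real.log (mpow (γ • A + (1 - γ) • B) (-p)).trace ≤
      γ * Real.log (mpow A (-p)).trace + (1 - γ) * Real.log (mpow B (-p)).trace := by
  obtain rfl | hn := n.eq_zero_or_pos
  · simp [Matrix.trace]
  have : Nonempty (Fin n) := ⟨⟨0, hn⟩⟩
  have hw : γ + (1 - γ) = 1 := add_sub_cancel γ 1
  calc log (mpow (γ • A + (1 - γ) • B) (-p)).trace
      ≤ log ((mpow A (-p)).trace ^ γ * (mpow B (-p)).trace ^ (1 - γ)) :=
        log_le_log (trace_mpow_pos (hA.smul_add_smul hB hγ0 (sub_nonneg.2 hγ1) hw) _)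
          (trace_mpow_neg_smul_add_smul_le hA hB hp.le hγ0 (sub_nonneg.2 hγ1) hw)
    _ = γ * log (mpow A (-p)).trace + (1 - γ) * log (mpow B (-p)).trace := by
        have htrA := trace_mpow_pos hA (-p)
        have htrB := trace_mpow_pos hB (-p)
        rw [log_mul (rpow_pos_of_pos htrA _).ne' (rpow_pos_of_pos htrB _).ne', log_rpow htrA,
          log_rpow htrB]
end

section
/- Let X be a symmetric positive definite n×n real matrix, B a symmetric n×n real matrix, and r a real number. Then the function h(t) = Tr((X + tB)^r), defined for t in a neighborhood of 0 (where X + tB remains positive definite), is differentiable at 0 with h'(0) = r·Tr(X^{r−1}·B). Equivalently, the gradient of X ↦ Tr(X^r) at a positive definite X, with respect to the Frobenius inner product on symmetric matrices, is r·X^{r−1}. -/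
open Matrix

/-!
On a compact interval `[a, b] ⊂ (0, ∞)` containing the spectra of all `X + tB` with `t` small,
approximate `x ↦ x ^ r` by polynomials `pₘ` whose derivatives converge uniformly to
`x ↦ r x ^ (r - 1)` (Weierstrass for the derivative, then integrate). For a polynomial,
`d/dt Tr p(X + tB) = Tr (p'(X + tB) B)` by cyclicity of the trace. Both traces are sums over the
eigenvalues `λᵢ` of `X + tB`, the second one weighted by the Rayleigh quotients of `B` at the
eigenvectors, which are bounded by the spectral radius of `B` whatever `t` is. Hence the
derivatives `Tr (pₘ'(X + tB) B)` converge uniformly near `t = 0`, and the derivative of the limit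
is the limit of the derivatives.
-/

open Polynomial Filter Topology Set
open scoped MatrixOrder

theorem Polynomial.exists_derivative_eq {K : Type*} [Field K] [CharZero K] (q : K[X]) :
    ∃ p : K[X], derivative p = q := by
  induction q using Polynomial.induction_on' with
  | add q₁ q₂ h₁ h₂ =>
    obtain ⟨p₁, rfl⟩ := h₁
    obtain ⟨p₂, rfl⟩ := h₂
    exact ⟨p₁ + p₂, derivative_add⟩
  | monomial k c =>
    refine ⟨monomial (k + 1) (c / (k + 1)), ?_⟩
    rw [derivative_monomial]
    congr 1
    push_cast
    field_simp

theorem exists_polynomial_near_and_derivative_near {f f' : ℝ → ℝ} {a b : ℝ}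
    (hf : ∀ x ∈ Icc a b, HasDerivWithinAt f (f' x) (Icc a b) x)
    (hf' : ContinuousOn f' (Icc a b)) {ε : ℝ} (hε : 0 < ε) :
    ∃ p : ℝ[X], ∀ x ∈ Icc a b, |p.eval x - f x| ≤ ε ∧ |(derivative p).eval x - f' x| ≤ ε := by
  rcases lt_or_ge b a with hba | hab
  · exact ⟨0, fun x hx => absurd (hx.1.trans hx.2) hba.not_ge⟩
  obtain ⟨q, hq⟩ :=
    exists_polynomial_near_of_continuousOn a b f' hf' (ε / (b - a + 1)) (by positivity)
  obtain ⟨p, hp⟩ := q.exists_derivative_eq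
  set P := p + C (f a - p.eval a)
  have hPa : P.eval a = f a := by simp [P]
  have hP' : derivative P = q := by simp [P, hp]
  have hη : ε / (b - a + 1) ≤ ε := div_le_self hε.le (by linarith)
  refine ⟨P, fun x hx => ⟨?_, hP' ▸ (hq x hx).le.trans hη⟩⟩
  have hmvt := (convex_Icc a b).norm_image_sub_le_of_norm_hasDerivWithin_le
    (f := fun y => P.eval y - f y)
    (fun y hy => (hP' ▸ P.hasDerivAt y).hasDerivWithinAt.sub (hf y hy))
    (fun y hy => (hq y hy).le) (left_mem_Icc.2 hab) hx
  simp only [hPa, sub_self, sub_zero, Real.norm_eq_abs,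
    abs_of_nonneg (sub_nonneg.2 hx.1)] at hmvt
  calc |P.eval x - f x| ≤ ε / (b - a + 1) * (x - a) := hmvt
    _ ≤ ε / (b - a + 1) * (b - a + 1) := by gcongr; linarith [hx.2]
    _ = ε := div_mul_cancel₀ _ (by linarith)

theorem exists_polynomial_tendstoUniformlyOn_and_derivative {f f' : ℝ → ℝ} {a b : ℝ}
    (hf : ∀ x ∈ Icc a b, HasDerivWithinAt f (f' x) (Icc a b) x)
    (hf' : ContinuousOn f' (Icc a b)) :
    ∃ p : ℕ → ℝ[X], TendstoUniformlyOn (fun m x => (p m).eval x) f atTop (Icc a b) ∧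
      TendstoUniformlyOn (fun m x => (derivative (p m)).eval x) f' atTop (Icc a b) := by
  choose p hp using fun m : ℕ =>
    exists_polynomial_near_and_derivative_near hf hf' (Nat.one_div_pos_of_nat (n := m))
  have hsmall : ∀ ε > 0, ∀ᶠ m : ℕ in atTop, 1 / ((m : ℝ) + 1) < ε := fun ε hε =>
    tendsto_one_div_add_atTop_nhds_zero_nat.eventually (gt_mem_nhds hε)
  refine ⟨p, ?_, ?_⟩ <;> refine Metric.tendstoUniformlyOn_iff.2 fun ε hε => ?_ <;>
    filter_upwards [hsmall ε hε] with m hm x hx <;> rw [dist_comm, Real.dist_eq]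
  exacts [(hp m x hx).1.trans_lt hm, (hp m x hx).2.trans_lt hm]

variable {ι : Type*} [Fintype ι] [DecidableEq ι]

namespace Matrix

section Derivative

-- Any matrix norm would do: it only gives a meaning to derivatives of matrix-valued functions.
attribute [local instance] Matrix.linftyOpNormedRing Matrix.linftyOpNormedAlgebra

theorem hasDerivAt_trace_pow_add_smul (X B : Matrix ι ι ℝ) (k : ℕ) (t : ℝ) :
    HasDerivAt (fun s : ℝ => ((X + s • B) ^ k).trace)
      (k * ((X + t • B) ^ (k - 1) * B).trace) t := by
  have hline : HasDerivAt (fun s : ℝ => X + s • B) B t := by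
    have := ((hasDerivAt_id t).smul_const B).const_add X
    rwa [one_smul] at this
  refine ((traceLinearMap ι ℝ ℝ).toContinuousLinearMap.hasFDerivAt.comp_hasDerivAt t
    (hline.fun_pow' k)).congr_deriv ?_
  have hcyclic : ∀ i ∈ Finset.range k, ((X + t • B) ^ (k.pred - i) * B * (X + t • B) ^ i).trace =
      ((X + t • B) ^ (k - 1) * B).trace := fun i hi => by
    rw [trace_mul_comm, ← mul_assoc, ← pow_add, Nat.pred_eq_sub_one,
      Nat.add_sub_of_le (by grind)]
  change trace (∑ i ∈ _, _) = _
  rw [trace_sum, Finset.sum_congr rfl hcyclic, Finset.sum_const, Finset.card_range,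
    nsmul_eq_mul]

theorem hasDerivAt_trace_aeval_add_smul (X B : Matrix ι ι ℝ) (p : ℝ[X]) (t : ℝ) :
    HasDerivAt (fun s : ℝ => (aeval (X + s • B) p).trace)
      ((aeval (X + t • B) (derivative p) * B).trace) t := by
  induction p using Polynomial.induction_on' with
  | add p q hp hq => simpa [add_mul] using hp.fun_add hq
  | monomial k c =>
    simp only [derivative_monomial, aeval_monomial, Algebra.algebraMap_eq_smul_one,
      smul_mul_assoc, one_mul, trace_smul, smul_eq_mul]
    exact ((hasDerivAt_trace_pow_add_smul X B k t).const_mul c).congr_deriv (by ring)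

end Derivative

theorem exists_spectrum_real_subset_Icc (B : Matrix ι ι ℝ) :
    ∃ c, 0 < c ∧ spectrum ℝ B ⊆ Icc (-c) c := by
  obtain ⟨c, hc, hB⟩ := (finite_real_spectrum (A := B)).isBounded.subset_closedBall_lt 0 0
  exact ⟨c, hc, by simpa [Real.closedBall_eq_Icc] using hB⟩

namespace IsHermitian

variable {A : Matrix ι ι ℝ}

lemma eigenvalues_eq_dotProduct (hA : A.IsHermitian) (i : ι) :
    hA.eigenvalues i = hA.eigenvectorBasis i ⬝ᵥ (A *ᵥ hA.eigenvectorBasis i) := by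
  simpa using hA.eigenvalues_eq i

lemma dotProduct_eigenvectorBasis_self (hA : A.IsHermitian) (i : ι) :
    hA.eigenvectorBasis i ⬝ᵥ hA.eigenvectorBasis i = 1 := by
  have h := real_inner_self_eq_norm_sq (hA.eigenvectorBasis i)
  rw [hA.eigenvectorBasis.orthonormal.1 i, one_pow,
    EuclideanSpace.inner_eq_star_dotProduct] at h
  simpa [dotProduct_comm] using h

lemma star_eigenvectorUnitary_mul_mul_apply (hA : A.IsHermitian) (B : Matrix ι ι ℝ) (i : ι) :
    (star (hA.eigenvectorUnitary : Matrix ι ι ℝ) * B * hA.eigenvectorUnitary) i i =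
      hA.eigenvectorBasis i ⬝ᵥ (B *ᵥ hA.eigenvectorBasis i) := by
  simp only [mul_apply, dotProduct, mulVec, Finset.mul_sum, Finset.sum_mul, star_apply,
    eigenvectorUnitary_apply, star_trivial]
  rw [Finset.sum_comm]
  simp only [mul_assoc, mul_comm, mul_left_comm]

lemma trace_cfc_mul (hA : A.IsHermitian) (f : ℝ → ℝ) (B : Matrix ι ι ℝ) :
    (cfc f A * B).trace =
      ∑ i, f (hA.eigenvalues i) * (hA.eigenvectorBasis i ⬝ᵥ (B *ᵥ hA.eigenvectorBasis i)) := by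
  rw [hA.cfc_eq, IsHermitian.cfc, Unitary.conjStarAlgAut_apply, mul_assoc, mul_assoc,
    trace_mul_comm, mul_assoc]
  simp only [trace, diag, diagonal_mul, hA.star_eigenvectorUnitary_mul_mul_apply]
  rfl

lemma trace_cfc (hA : A.IsHermitian) (f : ℝ → ℝ) :
    (cfc f A).trace = ∑ i, f (hA.eigenvalues i) := by
  simpa [dotProduct_eigenvectorBasis_self] using hA.trace_cfc_mul f 1

lemma dotProduct_mulVec_mem_Icc (hA : A.IsHermitian) {a b : ℝ} (h : spectrum ℝ A ⊆ Icc a b)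
    {v : ι → ℝ} (hv : v ⬝ᵥ v = 1) : v ⬝ᵥ (A *ᵥ v) ∈ Icc a b := by
  have ha : algebraMap ℝ _ a ≤ A :=
    (algebraMap_le_iff_le_spectrum (ha := hA)).2 fun x hx => (h hx).1
  have hb : A ≤ algebraMap ℝ _ b :=
    (le_algebraMap_iff_spectrum_le (ha := hA)).2 fun x hx => (h hx).2
  have ha' := ha.dotProduct_mulVec_nonneg v
  have hb' := hb.dotProduct_mulVec_nonneg v
  simp only [star_trivial, Algebra.algebraMap_eq_smul_one, sub_mulVec, smul_mulVec, one_mulVec,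
    dotProduct_sub, dotProduct_smul, hv, smul_eq_mul, mul_one, sub_nonneg] at ha' hb'
  exact ⟨ha', hb'⟩

variable {X B : Matrix ι ι ℝ}

theorem spectrum_add_smul_subset_Icc (hX : X.IsHermitian) (hB : B.IsHermitian) {a b c : ℝ}
    (hXs : spectrum ℝ X ⊆ Icc a b) (hBs : spectrum ℝ B ⊆ Icc (-c) c) (t : ℝ) :
    spectrum ℝ (X + t • B) ⊆ Icc (a - |t| * c) (b + |t| * c) := by
  have hM : (X + t • B).IsHermitian := hX.add (hB.smul (IsSelfAdjoint.all t))
  rw [hM.spectrum_real_eq_range_eigenvalues]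
  rintro _ ⟨i, rfl⟩
  have hv := hM.dotProduct_eigenvectorBasis_self i
  obtain ⟨hXa, hXb⟩ := hX.dotProduct_mulVec_mem_Icc hXs hv
  have hBv := abs_le.2 (hB.dotProduct_mulVec_mem_Icc hBs hv)
  have htB := abs_le.1 ((abs_mul t _).trans_le (mul_le_mul_of_nonneg_left hBv (abs_nonneg t)))
  rw [hM.eigenvalues_eq_dotProduct, add_mulVec, smul_mulVec, dotProduct_add, dotProduct_smul,
    smul_eq_mul]
  exact ⟨by linarith [htB.1], by linarith [htB.2]⟩

theorem eventually_spectrum_add_smul_subset_Ioo (hX : X.IsHermitian) (hB : B.IsHermitian)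
    {a b : ℝ} (hXs : spectrum ℝ X ⊆ Ioo a b) :
    ∀ᶠ t in 𝓝 (0 : ℝ), spectrum ℝ (X + t • B) ⊆ Ioo a b := by
  obtain ⟨c, -, hc⟩ := B.exists_spectrum_real_subset_Icc
  obtain ⟨δ, hδX, hδ⟩ : ∃ δ, spectrum ℝ X ⊆ Icc (a + δ) (b - δ) ∧ 0 < δ := by
    have : ∀ᶠ δ in 𝓝 0, spectrum ℝ X ⊆ Icc (a + δ) (b - δ) :=
      finite_real_spectrum.eventually_all.2 fun x hx =>
        ((eventually_le_nhds (sub_pos.2 (hXs hx).1)).and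
          (eventually_le_nhds (sub_pos.2 (hXs hx).2))).mono fun δ hδ =>
            ⟨by linarith [hδ.1], by linarith [hδ.2]⟩
    exact ((this.filter_mono nhdsWithin_le_nhds).and (self_mem_nhdsWithin (s := Ioi 0))).exists
  have hsmall : ∀ᶠ t in 𝓝 (0 : ℝ), |t| * c < δ := by
    have : Tendsto (fun t : ℝ => |t| * c) (𝓝 0) (𝓝 0) := by
      simpa using (by fun_prop : Continuous fun t : ℝ => |t| * c).tendsto' 0 0 (by simp)
    exact this.eventually (eventually_lt_nhds hδ)
  filter_upwards [hsmall] with t ht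
  exact (hX.spectrum_add_smul_subset_Icc hB hδX hc t).trans
    (Icc_subset_Ioo (by linarith) (by linarith))

theorem tendstoUniformlyOnFilter_trace_cfc_mul {α κ : Type*} {l : Filter κ} {l' : Filter α}
    {F : κ → ℝ → ℝ} {g : ℝ → ℝ} {S : Set ℝ} (hF : TendstoUniformlyOn F g l S)
    {M : α → Matrix ι ι ℝ} (hM : ∀ t, (M t).IsHermitian)
    (hMS : ∀ᶠ t in l', spectrum ℝ (M t) ⊆ S) (hB : B.IsHermitian) :
    TendstoUniformlyOnFilter (fun m t => (cfc (F m) (M t) * B).trace)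
      (fun t => (cfc g (M t) * B).trace) l l' := by
  obtain ⟨c, hc, hBc⟩ := B.exists_spectrum_real_subset_Icc
  rw [Metric.tendstoUniformlyOnFilter_iff]
  intro ε hε
  set δ := ε / (Fintype.card ι * c + 1)
  have hδ : 0 < δ := by positivity
  filter_upwards [(Metric.tendstoUniformlyOn_iff.1 hF δ hδ).prod_mk hMS]
    with ⟨m, t⟩ ⟨hm, ht⟩
  have hw (i : ι) := abs_le.2 <|
    hB.dotProduct_mulVec_mem_Icc hBc ((hM t).dotProduct_eigenvectorBasis_self i)
  rw [(hM t).trace_cfc_mul, (hM t).trace_cfc_mul, Real.dist_eq, ← Finset.sum_sub_distrib]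
  calc _ ≤ ∑ i : ι, δ * c := by
        refine (Finset.abs_sum_le_sum_abs _ _).trans (Finset.sum_le_sum fun i _ => ?_)
        rw [← sub_mul, abs_mul]
        have hFg := (hm _ (ht ((hM t).eigenvalues_mem_spectrum_real i))).le
        rw [Real.dist_eq] at hFg
        exact mul_le_mul hFg (hw i) (abs_nonneg _) hδ.le
    _ = Fintype.card ι * c * δ := by
        rw [Finset.sum_const, Finset.card_univ, nsmul_eq_mul]; ring
    _ < ε := by
        rw [mul_div_assoc', div_lt_iff₀ (by positivity)]
        linarith

theorem hasDerivAt_trace_cfc_add_smul {f f' : ℝ → ℝ} {a b : ℝ}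
    (hf : ∀ x ∈ Icc a b, HasDerivWithinAt f (f' x) (Icc a b) x)
    (hf' : ContinuousOn f' (Icc a b)) (hX : X.IsHermitian) (hB : B.IsHermitian)
    (hXs : spectrum ℝ X ⊆ Ioo a b) :
    HasDerivAt (fun t : ℝ => (cfc f (X + t • B)).trace) (cfc f' X * B).trace 0 := by
  obtain ⟨p, hp, hp'⟩ := exists_polynomial_tendstoUniformlyOn_and_derivative hf hf'
  have hM (t : ℝ) : (X + t • B).IsHermitian := hX.add (hB.smul (IsSelfAdjoint.all t))
  have hloc : ∀ᶠ t in 𝓝 (0 : ℝ), spectrum ℝ (X + t • B) ⊆ Icc a b :=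
    (hX.eventually_spectrum_add_smul_subset_Ioo hB hXs).mono fun _ ht =>
      ht.trans Ioo_subset_Icc_self
  have hpoly (q : ℝ[X]) (t : ℝ) : cfc q.eval (X + t • B) = aeval (X + t • B) q :=
    cfc_polynomial q _ (hM t)
  have key := hasDerivAt_of_tendstoUniformlyOnFilter (l := atTop)
    (f := fun m t => (cfc (p m).eval (X + t • B)).trace)
    (g := fun t => (cfc f (X + t • B)).trace)
    (hB.tendstoUniformlyOnFilter_trace_cfc_mul hp' hM hloc)
    (Eventually.of_forall fun _ => by
      simpa only [hpoly] using hasDerivAt_trace_aeval_add_smul X B _ _)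
    (hloc.mono fun t ht => by
      simp only [(hM t).trace_cfc]
      exact tendsto_finsetSum _ fun i _ =>
        hp.tendsto_at (ht ((hM t).eigenvalues_mem_spectrum_real i)))
  simpa only [zero_smul, add_zero] using key

end IsHermitian

theorem PosDef.exists_spectrum_real_subset_Ioo {X : Matrix ι ι ℝ} (hX : X.PosDef) :
    ∃ a b, 0 < a ∧ spectrum ℝ X ⊆ Ioo a b := by
  have hlower : ∀ᶠ a in 𝓝[>] 0, ∀ x ∈ spectrum ℝ X, a < x :=
    (finite_real_spectrum.eventually_all.2 fun x hx =>
      eventually_lt_nhds (hX.isStrictlyPositive.spectrum_pos hx)).filter_mono nhdsWithin_le_nhds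
  obtain ⟨a, haX, ha⟩ := (hlower.and self_mem_nhdsWithin).exists
  obtain ⟨b, hbX⟩ := ((finite_real_spectrum (A := X)).eventually_all.2 fun x _ =>
    eventually_gt_atTop x).exists (f := atTop)
  exact ⟨a, b, ha, fun x hx => ⟨haX x hx, hbX x hx⟩⟩

end Matrix

theorem mpow_eq_cfc {n : ℕ} {M : Matrix (Fin n) (Fin n) ℝ} (hM : M.IsHermitian) (r : ℝ) :
    mpow M r = cfc (fun x : ℝ => x ^ r) M := by
  rw [mpow, dif_pos hM, hM.cfc_eq, IsHermitian.cfc, Unitary.conjStarAlgAut_apply]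
  rfl

/-- For `X ≻ 0` symmetric, `B` symmetric and `r : ℝ`, the function
`h(t) = Tr((X + tB)^r)` is differentiable at `0` with `h'(0) = r·Tr(X^{r−1}·B)`
(equivalently, the Frobenius gradient of `X ↦ Tr(X^r)` at `X` is `r·X^{r−1}`). -/
theorem deriv_trace_mpow (n : ℕ) (r : ℝ)
    (X B : Matrix (Fin n) (Fin n) ℝ) (hX : X.PosDef) (hB : B.IsHermitian) :
    HasDerivAt (fun t : ℝ => (mpow (X + t • B) r).trace)
      (r * (mpow X (r - 1) * B).trace) 0 := by
  obtain ⟨a, b, ha, hXs⟩ := hX.exists_spectrum_real_subset_Ioo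
  have hx0 {x : ℝ} (hx : x ∈ Icc a b) : x ≠ 0 := (ha.trans_le hx.1).ne'
  have key := hX.isHermitian.hasDerivAt_trace_cfc_add_smul (f := fun x => x ^ r)
    (fun x hx => (Real.hasDerivAt_rpow_const (Or.inl (hx0 hx))).hasDerivWithinAt)
    (continuousOn_const.mul (continuousOn_id.rpow_const fun x hx => Or.inl (hx0 hx))) hB hXs
  simp only [mpow_eq_cfc (hX.isHermitian.add (hB.smul (IsSelfAdjoint.all _))),
    mpow_eq_cfc hX.isHermitian]
  rw [hX.isHermitian.trace_cfc_mul, Finset.mul_sum]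
  rw [hX.isHermitian.trace_cfc_mul] at key
  simpa only [mul_assoc] using key
end

section
/- Let A and B be symmetric positive definite n×n real matrices, and for a symmetric matrix M let λ₁(M) ≤ … ≤ λₙ(M) denote its eigenvalues in increasing order. Then for every k ∈ {1,…,n}, λ_k(A)·λ₁(B) ≤ λ_k(B^{1/2}·A·B^{1/2}) ≤ λ_k(A)·λₙ(B), where B^{1/2} is the positive definite square root of B (and B^{1/2}·A·B^{1/2} is similar to A·B, so these are the eigenvalues of A·B). -/
open Matrix

/-- Eigenvalues of a (Hermitian) real matrix sorted in increasing order
(`sortedEig M 0 = λ₁` is the smallest, `sortedEig M (n-1) = λₙ` the largest). -/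
noncomputable def sortedEig {n : ℕ} (M : Matrix (Fin n) (Fin n) ℝ) : Fin n → ℝ :=
  if h : M.IsHermitian then h.eigenvalues ∘ Tuple.sort h.eigenvalues else 0


/-! Write `S = B^{1/2}`: it is symmetric and invertible with `S * S = B`, so
`⟪x, S A S x⟫ = ⟪S x, A (S x)⟫` and `λ₁(B) ‖x‖² ≤ ‖S x‖² ≤ λₙ(B) ‖x‖²`. Pulling back along `S` the
Courant–Fischer subspaces for `λ_k(A)` (of dimensions `n - k` and `k + 1`, on which `⟪y, A y⟫` is
`≥`, resp. `≤`, `λ_k(A) ‖y‖²`) and using `λ_k(A) > 0` gives subspaces of the same dimensions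
witnessing the two bounds for `S A S` (Ostrowski's theorem). Courant–Fischer comes down to one
fact: a subspace on which a form is `≥ c ‖x‖²` and one on which it is `≤ d ‖x‖²` meet
nontrivially when their dimensions add up to more than `n`, whence `c ≤ d`; spans of eigenvectors
provide the extremal subspaces. -/

open Module Submodule
open scoped RealInnerProductSpace

theorem Submodule.finrank_comap_of_isUnit {K V : Type*} [Ring K] [AddCommGroup V] [Module K V]
    {f : Module.End K V} (hf : IsUnit f) (W : Submodule K V) :
    finrank K (W.comap f) = finrank K W := by
  obtain ⟨u, rfl⟩ := hf
  rw [← LinearMap.GeneralLinearGroup.generalLinearEquiv_to_linearMap,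
    comap_equiv_eq_map_symm, LinearEquiv.finrank_map_eq]

theorem le_of_sq_norm_bounds_of_finrank_lt {E : Type*} [NormedAddCommGroup E] [NormedSpace ℝ E]
    [FiniteDimensional ℝ E] (q : E → ℝ) {V W : Submodule ℝ E}
    (hVW : finrank ℝ E < finrank ℝ V + finrank ℝ W) {c d : ℝ}
    (hV : ∀ x ∈ V, c * ‖x‖ ^ 2 ≤ q x) (hW : ∀ x ∈ W, q x ≤ d * ‖x‖ ^ 2) : c ≤ d := by
  obtain ⟨x, hxV, hxW, hx⟩ : ∃ x ∈ V, x ∈ W ∧ x ≠ 0 := by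
    by_contra! h
    exact hVW.not_ge (finrank_add_finrank_le_of_disjoint (disjoint_def.mpr h))
  have hx2 : 0 < ‖x‖ ^ 2 := by positivity
  exact le_of_mul_le_mul_right ((hV x hxV).trans (hW x hxW)) hx2

namespace OrthonormalBasis

variable {E : Type*} [NormedAddCommGroup E] [InnerProductSpace ℝ E] {ι : Type*} [Fintype ι]
  (b : OrthonormalBasis ι ℝ E) {μ : ι → ℝ} {T : E →ₗ[ℝ] E}

theorem inner_apply_self_eq_sum (hb : ∀ i, T (b i) = μ i • b i) (x : E) :
    ⟪x, T x⟫ = ∑ i, μ i * ⟪b i, x⟫ ^ 2 := by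
  conv_lhs => arg 3; rw [← b.sum_repr' x]
  simp only [map_sum, map_smul, hb, inner_sum, inner_smul_right, real_inner_comm x]
  exact Finset.sum_congr rfl fun i _ => by ring

theorem inner_apply_self_le (hb : ∀ i, T (b i) = μ i • b i) {d : ℝ} {x : E}
    (hx : ∀ i, ⟪b i, x⟫ ≠ 0 → μ i ≤ d) : ⟪x, T x⟫ ≤ d * ‖x‖ ^ 2 := by
  rw [b.inner_apply_self_eq_sum hb, ← b.sum_sq_inner_right, Finset.mul_sum]
  refine Finset.sum_le_sum fun i _ => ?_
  by_cases hi : ⟪b i, x⟫ = 0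
  · simp [hi]
  · exact mul_le_mul_of_nonneg_right (hx i hi) (sq_nonneg _)

theorem le_inner_apply_self (hb : ∀ i, T (b i) = μ i • b i) {c : ℝ} {x : E}
    (hx : ∀ i, ⟪b i, x⟫ ≠ 0 → c ≤ μ i) : c * ‖x‖ ^ 2 ≤ ⟪x, T x⟫ := by
  rw [b.inner_apply_self_eq_sum hb, ← b.sum_sq_inner_right, Finset.mul_sum]
  refine Finset.sum_le_sum fun i _ => ?_
  by_cases hi : ⟪b i, x⟫ = 0
  · simp [hi]
  · exact mul_le_mul_of_nonneg_right (hx i hi) (sq_nonneg _)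

theorem finrank_span_image (s : Finset ι) : finrank ℝ (span ℝ (b '' s)) = s.card := by
  have h := finrank_span_eq_card
    (b.orthonormal.linearIndependent.comp (Subtype.val : ↥(s : Set ι) → ι) Subtype.val_injective)
  rw [Set.range_comp, Subtype.range_coe] at h
  simpa using h

theorem mem_of_inner_ne_zero_of_mem_span_image {s : Set ι} {x : E} (hx : x ∈ span ℝ (b '' s))
    {i : ι} (hi : ⟪b i, x⟫ ≠ 0) : i ∈ s := by
  rw [← b.coe_toBasis, Basis.mem_span_image] at hx
  rw [← b.repr_apply_apply, ← b.coe_toBasis_repr_apply] at hi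
  exact hx (Finsupp.mem_support_iff.mpr hi)

end OrthonormalBasis

namespace Matrix

theorem IsHermitian.toEuclideanLin_eigenvectorBasis {ι : Type*} [Fintype ι] [DecidableEq ι]
    {M : Matrix ι ι ℝ} (hM : M.IsHermitian) (j : ι) :
    toEuclideanLin M (hM.eigenvectorBasis j) = hM.eigenvalues j • hM.eigenvectorBasis j := by
  ext1
  simp [hM.mulVec_eigenvectorBasis]

variable {n : ℕ} {M : Matrix (Fin n) (Fin n) ℝ}

section Spectrum

open Finset

theorem IsHermitian.sortedEig_eq (hM : M.IsHermitian) (k : Fin n) :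
    sortedEig M k = hM.eigenvalues (Tuple.sort hM.eigenvalues k) := by
  simp only [sortedEig, dif_pos hM, Function.comp_apply]

theorem IsHermitian.eigMin_le (hM : M.IsHermitian) (i : Fin n) :
    eigMin M ≤ hM.eigenvalues i := by
  rw [eigMin, dif_pos hM]
  exact ciInf_le (Set.finite_range _).bddBelow i

theorem IsHermitian.le_eigMax (hM : M.IsHermitian) (i : Fin n) :
    hM.eigenvalues i ≤ eigMax M := by
  rw [eigMax, dif_pos hM]
  exact le_ciSup (Set.finite_range _).bddAbove i

theorem IsHermitian.eigMin_mul_sq_norm_le (hM : M.IsHermitian) (x : EuclideanSpace ℝ (Fin n)) :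
    eigMin M * ‖x‖ ^ 2 ≤ ⟪x, toEuclideanLin M x⟫ :=
  hM.eigenvectorBasis.le_inner_apply_self hM.toEuclideanLin_eigenvectorBasis
    fun i _ => hM.eigMin_le i

theorem IsHermitian.inner_le_eigMax_mul_sq_norm (hM : M.IsHermitian)
    (x : EuclideanSpace ℝ (Fin n)) : ⟪x, toEuclideanLin M x⟫ ≤ eigMax M * ‖x‖ ^ 2 :=
  hM.eigenvectorBasis.inner_apply_self_le hM.toEuclideanLin_eigenvectorBasis
    fun i _ => hM.le_eigMax i

theorem IsHermitian.exists_finrank_eq_sub_forall_sortedEig_mul_le (hM : M.IsHermitian)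
    (k : Fin n) : ∃ V : Submodule ℝ (EuclideanSpace ℝ (Fin n)), finrank ℝ V = n - k ∧
      ∀ x ∈ V, sortedEig M k * ‖x‖ ^ 2 ≤ ⟪x, toEuclideanLin M x⟫ := by
  set σ := Tuple.sort hM.eigenvalues
  refine ⟨span ℝ (hM.eigenvectorBasis '' ((Ici k).image σ : Finset (Fin n))), ?_,
    fun x hx => ?_⟩
  · rw [OrthonormalBasis.finrank_span_image, card_image_of_injective _ σ.injective, Fin.card_Ici]
  · refine hM.eigenvectorBasis.le_inner_apply_self hM.toEuclideanLin_eigenvectorBasis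
      fun i hi => ?_
    obtain ⟨j, hj, rfl⟩ := mem_image.mp
      (hM.eigenvectorBasis.mem_of_inner_ne_zero_of_mem_span_image hx hi)
    rw [hM.sortedEig_eq]
    exact Tuple.monotone_sort hM.eigenvalues (mem_Ici.mp hj)

theorem IsHermitian.exists_finrank_eq_add_one_forall_le_sortedEig_mul (hM : M.IsHermitian)
    (k : Fin n) : ∃ V : Submodule ℝ (EuclideanSpace ℝ (Fin n)), finrank ℝ V = k + 1 ∧
      ∀ x ∈ V, ⟪x, toEuclideanLin M x⟫ ≤ sortedEig M k * ‖x‖ ^ 2 := by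
  set σ := Tuple.sort hM.eigenvalues
  refine ⟨span ℝ (hM.eigenvectorBasis '' ((Iic k).image σ : Finset (Fin n))), ?_,
    fun x hx => ?_⟩
  · rw [OrthonormalBasis.finrank_span_image, card_image_of_injective _ σ.injective, Fin.card_Iic]
  · refine hM.eigenvectorBasis.inner_apply_self_le hM.toEuclideanLin_eigenvectorBasis
      fun i hi => ?_
    obtain ⟨j, hj, rfl⟩ := mem_image.mp
      (hM.eigenvectorBasis.mem_of_inner_ne_zero_of_mem_span_image hx hi)
    rw [hM.sortedEig_eq]
    exact Tuple.monotone_sort hM.eigenvalues (mem_Iic.mp hj)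

theorem IsHermitian.le_sortedEig (hM : M.IsHermitian) {k : Fin n}
    {V : Submodule ℝ (EuclideanSpace ℝ (Fin n))} (hV : n ≤ finrank ℝ V + k) {c : ℝ}
    (hc : ∀ x ∈ V, c * ‖x‖ ^ 2 ≤ ⟪x, toEuclideanLin M x⟫) : c ≤ sortedEig M k := by
  obtain ⟨W, hW, hWM⟩ := hM.exists_finrank_eq_add_one_forall_le_sortedEig_mul k
  exact le_of_sq_norm_bounds_of_finrank_lt _ (by rw [finrank_euclideanSpace_fin, hW]; omega)
    hc hWM

theorem IsHermitian.sortedEig_le (hM : M.IsHermitian) {k : Fin n}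
    {V : Submodule ℝ (EuclideanSpace ℝ (Fin n))} (hV : k < finrank ℝ V) {d : ℝ}
    (hd : ∀ x ∈ V, ⟪x, toEuclideanLin M x⟫ ≤ d * ‖x‖ ^ 2) : sortedEig M k ≤ d := by
  obtain ⟨W, hW, hWM⟩ := hM.exists_finrank_eq_sub_forall_sortedEig_mul_le k
  exact le_of_sq_norm_bounds_of_finrank_lt _ (by rw [finrank_euclideanSpace_fin, hW]; omega)
    hWM hd

end Spectrum

section Congruence

variable {A S : Matrix (Fin n) (Fin n) ℝ}

theorem inner_toEuclideanLin_conjTranspose_mul_mul (x : EuclideanSpace ℝ (Fin n)) :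
    ⟪x, toEuclideanLin (Sᴴ * A * S) x⟫ =
      ⟪toEuclideanLin S x, toEuclideanLin A (toEuclideanLin S x)⟫ := by
  rw [toLpLin_mul_same, toLpLin_mul_same, LinearMap.comp_apply, LinearMap.comp_apply,
    toEuclideanLin_conjTranspose_eq_adjoint, LinearMap.adjoint_inner_right]

theorem inner_toEuclideanLin_conjTranspose_mul_self (x : EuclideanSpace ℝ (Fin n)) :
    ⟪x, toEuclideanLin (Sᴴ * S) x⟫ = ‖toEuclideanLin S x‖ ^ 2 := by
  rw [toLpLin_mul_same, LinearMap.comp_apply, toEuclideanLin_conjTranspose_eq_adjoint,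
    LinearMap.adjoint_inner_right, real_inner_self_eq_norm_sq]

theorem IsHermitian.sortedEig_mul_eigMin_le_sortedEig_conjTranspose_mul_mul
    (hA : A.IsHermitian) {k : Fin n} (hk : 0 ≤ sortedEig A k) (hS : IsUnit S) :
    sortedEig A k * eigMin (Sᴴ * S) ≤ sortedEig (Sᴴ * A * S) k := by
  obtain ⟨V, hV, hVA⟩ := hA.exists_finrank_eq_sub_forall_sortedEig_mul_le k
  have hSV : finrank ℝ (V.comap (toEuclideanLin S)) = finrank ℝ V :=
    finrank_comap_of_isUnit (hS.map (toLpLinAlgEquiv 2)) V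
  refine (isHermitian_conjTranspose_mul_mul S hA).le_sortedEig
    (V := V.comap (toEuclideanLin S)) (by omega) fun x hx => ?_
  calc sortedEig A k * eigMin (Sᴴ * S) * ‖x‖ ^ 2
      ≤ sortedEig A k * ⟪x, toEuclideanLin (Sᴴ * S) x⟫ := by
        rw [mul_assoc]
        exact mul_le_mul_of_nonneg_left
          ((isHermitian_conjTranspose_mul_self S).eigMin_mul_sq_norm_le x) hk
    _ = sortedEig A k * ‖toEuclideanLin S x‖ ^ 2 := by
        rw [inner_toEuclideanLin_conjTranspose_mul_self]
    _ ≤ ⟪x, toEuclideanLin (Sᴴ * A * S) x⟫ := by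
        rw [inner_toEuclideanLin_conjTranspose_mul_mul]
        exact hVA _ hx

theorem IsHermitian.sortedEig_conjTranspose_mul_mul_le_sortedEig_mul_eigMax
    (hA : A.IsHermitian) {k : Fin n} (hk : 0 ≤ sortedEig A k) (hS : IsUnit S) :
    sortedEig (Sᴴ * A * S) k ≤ sortedEig A k * eigMax (Sᴴ * S) := by
  obtain ⟨V, hV, hVA⟩ := hA.exists_finrank_eq_add_one_forall_le_sortedEig_mul k
  have hSV : finrank ℝ (V.comap (toEuclideanLin S)) = finrank ℝ V :=
    finrank_comap_of_isUnit (hS.map (toLpLinAlgEquiv 2)) V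
  refine (isHermitian_conjTranspose_mul_mul S hA).sortedEig_le
    (V := V.comap (toEuclideanLin S)) (by omega) fun x hx => ?_
  calc ⟪x, toEuclideanLin (Sᴴ * A * S) x⟫
      ≤ sortedEig A k * ‖toEuclideanLin S x‖ ^ 2 := by
        rw [inner_toEuclideanLin_conjTranspose_mul_mul]
        exact hVA _ hx
    _ = sortedEig A k * ⟪x, toEuclideanLin (Sᴴ * S) x⟫ := by
        rw [inner_toEuclideanLin_conjTranspose_mul_self]
    _ ≤ sortedEig A k * eigMax (Sᴴ * S) * ‖x‖ ^ 2 := by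
        rw [mul_assoc]
        exact mul_le_mul_of_nonneg_left
          ((isHermitian_conjTranspose_mul_self S).inner_le_eigMax_mul_sq_norm x) hk

end Congruence

section Power

open scoped MatrixOrder

theorem IsHermitian.mpow_eq_cfc (hM : M.IsHermitian) (r : ℝ) :
    mpow M r = cfc (fun x : ℝ => x ^ r) M := by
  rw [cfc_eq hM, IsHermitian.cfc, mpow, dif_pos hM, Unitary.conjStarAlgAut_apply]
  rfl

theorem IsHermitian.isHermitian_mpow (hM : M.IsHermitian) (r : ℝ) : (mpow M r).IsHermitian := by
  rw [hM.mpow_eq_cfc]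
  exact cfc_predicate _ M

theorem IsHermitian.mpow_one (hM : M.IsHermitian) : mpow M 1 = M := by
  rw [hM.mpow_eq_cfc]
  simp only [Real.rpow_one]
  exact cfc_id' ℝ M

theorem PosDef.mpow_mul_mpow (hM : M.PosDef) (r s : ℝ) :
    mpow M r * mpow M s = mpow M (r + s) := by
  rw [hM.isHermitian.mpow_eq_cfc, hM.isHermitian.mpow_eq_cfc, hM.isHermitian.mpow_eq_cfc,
    ← cfc_mul _ _ M (M.finite_real_spectrum.continuousOn _) (M.finite_real_spectrum.continuousOn _)]
  exact cfc_congr fun x hx => (Real.rpow_add (hM.isStrictlyPositive.spectrum_pos hx) r s).symm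

theorem PosDef.isUnit_mpow (hM : M.PosDef) (r : ℝ) : IsUnit (mpow M r) := by
  rw [hM.isHermitian.mpow_eq_cfc]
  exact isUnit_cfc _ M (M.finite_real_spectrum.continuousOn _) hM.isHermitian fun x hx =>
    (Real.rpow_pos_of_pos (hM.isStrictlyPositive.spectrum_pos hx) r).ne'

end Power

end Matrix

/-- For symmetric positive definite `A, B` and every `k`,
`λ_k(A)·λ₁(B) ≤ λ_k(B^{1/2} A B^{1/2}) ≤ λ_k(A)·λₙ(B)`, where `B^{1/2}` is the positive
definite square root of `B` (so these are the eigenvalues of `A·B`), `λ₁(B) = λ_min(B)`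
and `λₙ(B) = λ_max(B)`. -/
theorem eigenvalues_product_posDef (n : ℕ) (A B : Matrix (Fin n) (Fin n) ℝ)
    (hA : A.PosDef) (hB : B.PosDef) (k : Fin n) :
    sortedEig A k * eigMin B ≤
        sortedEig (mpow B ((1 : ℝ) / 2) * A * mpow B ((1 : ℝ) / 2)) k ∧
      sortedEig (mpow B ((1 : ℝ) / 2) * A * mpow B ((1 : ℝ) / 2)) k ≤
        sortedEig A k * eigMax B := by
  have hS : (mpow B ((1 : ℝ) / 2))ᴴ = mpow B ((1 : ℝ) / 2) :=
    hB.isHermitian.isHermitian_mpow _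
  have hSS : (mpow B ((1 : ℝ) / 2))ᴴ * mpow B ((1 : ℝ) / 2) = B := by
    rw [hS, hB.mpow_mul_mpow, add_halves, hB.isHermitian.mpow_one]
  have hk : 0 ≤ sortedEig A k := by
    rw [hA.isHermitian.sortedEig_eq]
    exact (hA.eigenvalues_pos _).le
  have lower := hA.isHermitian.sortedEig_mul_eigMin_le_sortedEig_conjTranspose_mul_mul hk
    (hB.isUnit_mpow ((1 : ℝ) / 2))
  have upper := hA.isHermitian.sortedEig_conjTranspose_mul_mul_le_sortedEig_mul_eigMax hk
    (hB.isUnit_mpow ((1 : ℝ) / 2))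
  rw [hSS, hS] at lower upper
  exact ⟨lower, upper⟩
end
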